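/- For every ξ ∈ S¹ with ξ·γ_i ≠ 0 for all i = 1, …, m, the following hold: γ(ξ) = 0 if and only if γ^⊥(ξ) = 0; and if γ(ξ) = 0 then γ†(ξ) = 0. (The zero sets of γ and γ^⊥ coincide and are contained in the zero set of γ†.) -/

import Mathlib

noncomputable section

open MeasureTheory

/-- Dot product in `ℝ²`. -/
def dot2 (a b : ℝ × ℝ) : ℝ := a.1 * b.1 + a.2 * b.2

/-- The rotation `w ↦ w^⊥ = (−w2, w1)`. -/
def perp2 (w : ℝ × ℝ) : ℝ × ℝ := (-w.2, w.1)

/-- The symmetric tensor `w² = (w1², w1 w2, w2²)`, identified with a vector in `ℝ³`. -/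
def tsq (w : ℝ × ℝ) : Fin 3 → ℝ := ![w.1 ^ 2, w.1 * w.2, w.2 ^ 2]

/-- The symmetric tensor `w ⊙ w^⊥ = (−w1 w2, (w1² − w2²)/2, w1 w2)`. -/
def todot (w : ℝ × ℝ) : Fin 3 → ℝ := ![-(w.1 * w.2), (w.1 ^ 2 - w.2 ^ 2) / 2, w.1 * w.2]

/-- The vector `γ(ξ) = −Σᵢ cᵢ γᵢ² / (ξ·γᵢ)`. -/
def gammaVec (m : ℕ) (γ : Fin m → ℝ × ℝ) (c : Fin m → ℝ) (ξ : ℝ × ℝ) : Fin 3 → ℝ :=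
  -∑ i : Fin m, (c i / dot2 ξ (γ i)) • tsq (γ i)

/-- The vector `γ†(ξ) = −Σᵢ cᵢ (γᵢ ⊙ γᵢ^⊥) / (ξ·γᵢ)`. -/
def gammaDag (m : ℕ) (γ : Fin m → ℝ × ℝ) (c : Fin m → ℝ) (ξ : ℝ × ℝ) : Fin 3 → ℝ :=
  -∑ i : Fin m, (c i / dot2 ξ (γ i)) • todot (γ i)

/-- The vector `γ^⊥(ξ) = −Σᵢ cᵢ (γᵢ^⊥)² / (ξ·γᵢ)`. -/
def gammaPerp (m : ℕ) (γ : Fin m → ℝ × ℝ) (c : Fin m → ℝ) (ξ : ℝ × ℝ) : Fin 3 → ℝ :=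
  -∑ i : Fin m, (c i / dot2 ξ (γ i)) • tsq (perp2 (γ i))

/-!
Identify `w²` with the symmetric matrix `w wᵀ` and let `R` be the rotation by `π/2`, so that
`w^⊥ = R w`. Then `(w^⊥)² = R (w wᵀ) Rᵀ` and `w ⊙ w^⊥` is the symmetric part of `(w wᵀ) Rᵀ`:
both are images of `w²` under linear maps of symmetric tensors, the first of which is an
involution since `R² = -1`. Hence `γ^⊥(ξ)` and `γ†(ξ)` are the images of `γ(ξ)` under these maps.
-/

/-- `S ↦ R S Rᵀ` in the coordinates `(S₁₁, S₁₂, S₂₂)`. -/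
def conjRot : (Fin 3 → ℝ) →ₗ[ℝ] (Fin 3 → ℝ) where
  toFun x := ![x 2, -x 1, x 0]
  map_add' x y := by
    ext i
    fin_cases i <;> simp [add_comm]
  map_smul' a x := by
    ext i
    fin_cases i <;> simp

/-- `S ↦ (S Rᵀ + R S) / 2` in the coordinates `(S₁₁, S₁₂, S₂₂)`. -/
def symmMulRot : (Fin 3 → ℝ) →ₗ[ℝ] (Fin 3 → ℝ) where
  toFun x := ![-x 1, (x 0 - x 2) / 2, x 1]
  map_add' x y := by
    ext i
    fin_cases i <;> simp <;> ring
  map_smul' a x := by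
    ext i
    fin_cases i <;> simp
    ring

theorem conjRot_involutive : Function.Involutive conjRot := by
  intro x
  ext i
  fin_cases i <;> simp [conjRot]

theorem tsq_perp2 (w : ℝ × ℝ) : tsq (perp2 w) = conjRot (tsq w) := by
  ext i
  fin_cases i <;> simp [tsq, perp2, conjRot]
  ring

theorem todot_eq_symmMulRot_tsq (w : ℝ × ℝ) : todot w = symmMulRot (tsq w) := by
  ext i
  fin_cases i <;> simp [todot, tsq, symmMulRot]

theorem gammaPerp_eq_conjRot (m : ℕ) (γ : Fin m → ℝ × ℝ) (c : Fin m → ℝ) (ξ : ℝ × ℝ) :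
    gammaPerp m γ c ξ = conjRot (gammaVec m γ c ξ) := by
  simp only [gammaPerp, gammaVec, tsq_perp2, map_neg, map_sum, map_smul]

theorem gammaDag_eq_symmMulRot (m : ℕ) (γ : Fin m → ℝ × ℝ) (c : Fin m → ℝ) (ξ : ℝ × ℝ) :
    gammaDag m γ c ξ = symmMulRot (gammaVec m γ c ξ) := by
  simp only [gammaDag, gammaVec, todot_eq_symmMulRot_tsq, map_neg, map_sum, map_smul]

theorem zero_sets_of_gamma_general
    (m : ℕ) (γ : Fin m → ℝ × ℝ) (c : Fin m → ℝ)
    (ξ : ℝ × ℝ) :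
    (gammaVec m γ c ξ = 0 ↔ gammaPerp m γ c ξ = 0) ∧
      (gammaVec m γ c ξ = 0 → gammaDag m γ c ξ = 0) := by
  rw [gammaPerp_eq_conjRot, gammaDag_eq_symmMulRot,
    map_eq_zero_iff conjRot conjRot_involutive.injective]
  exact ⟨Iff.rfl, fun h => by rw [h, map_zero]⟩

/-- the zero sets of `γ(ξ)` and `γ^⊥(ξ)` coincide and are contained in
the zero set of `γ†(ξ)`. -/
theorem zero_sets_of_gamma
    (m : ℕ) (hm : 1 ≤ m) (γ : Fin m → ℝ × ℝ) (c : Fin m → ℝ)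
    (hunit : ∀ i, (γ i).1 ^ 2 + (γ i).2 ^ 2 = 1)
    (hdist : Function.Injective γ)
    (hc : ∀ i, c i ≠ 0)
    (ξ : ℝ × ℝ) (hξ : ξ.1 ^ 2 + ξ.2 ^ 2 = 1)
    (hξγ : ∀ i, dot2 ξ (γ i) ≠ 0) :
    (gammaVec m γ c ξ = 0 ↔ gammaPerp m γ c ξ = 0) ∧
      (gammaVec m γ c ξ = 0 → gammaDag m γ c ξ = 0) :=
  zero_sets_of_gamma_general m γ c ξ
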